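/- arXiv:2006.14211 — 2 statements merged into one kernel-verified Lean document; each statement's English description precedes it below -/
import Mathlib

section
/- Let w¹, w² ∈ R^d be two models with ‖w¹ − w²‖_2 ≤ τ, let y ∈ R^n be any response vector, and for j = 1, 2 let s^j be the M-truncated weight vectors they induce, s^j_i = min(M, 1/|⟨w^j, x_i⟩ − y_i|). Then for any covariates with ‖x_i‖_2 ≤ R_X for all i, every coordinate satisfies |s¹_i − s²_i| ≤ 2τM²R_X, and consequently ‖s¹ − s²‖_1 ≤ 2nτM²R_X. -/
open MeasureTheory ProbabilityTheory Matrix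

/-- Euclidean norm of a vector in `Fin k → ℝ`. -/
noncomputable def euclNorm {k : ℕ} (v : Fin k → ℝ) : ℝ := Real.sqrt (∑ j, v j ^ 2)

/-- The `M`-truncated IRLS weight for a residual `r`, i.e. `min (1/|r|) M`,
interpreted as `M` when the residual is zero. -/
noncomputable def trWeight (M r : ℝ) : ℝ := if r = 0 then M else min (1 / |r|) M

/-- Smallest eigenvalue of a symmetric matrix, via the Rayleigh quotient. -/
noncomputable def lamMin {k : ℕ} (A : Matrix (Fin k) (Fin k) ℝ) : ℝ :=
  sInf {r : ℝ | ∃ v : Fin k → ℝ, euclNorm v = 1 ∧ r = v ⬝ᵥ A.mulVec v}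

/-- Largest eigenvalue of a symmetric matrix, via the Rayleigh quotient. -/
noncomputable def lamMax {k : ℕ} (A : Matrix (Fin k) (Fin k) ℝ) : ℝ :=
  sSup {r : ℝ | ∃ v : Fin k → ℝ, euclNorm v = 1 ∧ r = v ⬝ᵥ A.mulVec v}

/-- Operator (spectral) norm of a `d × n` real matrix. -/
noncomputable def opNorm2 {d n : ℕ} (X : Matrix (Fin d) (Fin n) ℝ) : ℝ :=
  Real.sqrt (lamMax (X * Xᵀ))

/-- Covariate matrix whose `i`-th column is the sample point `s i`. -/
def Xmat {d n : ℕ} (s : Fin n → Fin d → ℝ) : Matrix (Fin d) (Fin n) ℝ :=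
  Matrix.of fun j i => s i j

/-- `X_G`: the matrix agreeing with `X` on columns in `G` and zero elsewhere. -/
def restrictCols {d n : ℕ} (X : Matrix (Fin d) (Fin n) ℝ) (G : Finset (Fin n)) :
    Matrix (Fin d) (Fin n) ℝ :=
  Matrix.of fun j i => if i ∈ G then X j i else 0

/-- The `M`-truncated weights assigned by model `w` on data `(X, y)`. -/
noncomputable def stirWeights {d n : ℕ} (X : Matrix (Fin d) (Fin n) ℝ) (y : Fin n → ℝ)
    (M : ℝ) (w : Fin d → ℝ) : Fin n → ℝ :=
  fun i => trWeight M ((Xᵀ.mulVec w - y) i)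

/-- One step of (M-truncated) IRLS: weighted least squares with the current weights. -/
noncomputable def stirStep {d n : ℕ} (X : Matrix (Fin d) (Fin n) ℝ) (y : Fin n → ℝ)
    (M : ℝ) (w : Fin d → ℝ) : Fin d → ℝ :=
  (X * Matrix.diagonal (stirWeights X y M w) * Xᵀ)⁻¹.mulVec
    (X.mulVec fun i => stirWeights X y M w i * y i)

/-- One step of STIR-GD with step length `C`: `w - (2C/(Mn)) • X S r`. -/
noncomputable def stirGDStep {d n : ℕ} (X : Matrix (Fin d) (Fin n) ℝ) (y : Fin n → ℝ)
    (C M : ℝ) (w : Fin d → ℝ) : Fin d → ℝ :=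
  w - (2 * C / (M * n)) • X.mulVec (fun i => stirWeights X y M w i * (Xᵀ.mulVec w - y) i)

/-- An execution trace of a stagewise truncated algorithm (STIR / STIR-GD):
`wStage T` is the model at the start of stage `T`, within stage `T` the truncation
level is `η^T * M₁`, the inner loop applies `step`, and the stage ends the first time
successive iterates are within `2/(η * (η^T * M₁))` of each other. -/
def IsSTIRTrace {d : ℕ} (step : ℝ → (Fin d → ℝ) → (Fin d → ℝ))
    (M₁ η : ℝ) (w0 : Fin d → ℝ) (wStage : ℕ → Fin d → ℝ) (stageLen : ℕ → ℕ) : Prop :=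
  wStage 0 = w0 ∧
  ∃ wIter : ℕ → ℕ → Fin d → ℝ,
    (∀ T, wIter T 0 = wStage T) ∧
    (∀ T t, wIter T (t + 1) = step (η ^ T * M₁) (wIter T t)) ∧
    (∀ T, euclNorm (wIter T (stageLen T + 1) - wIter T (stageLen T)) ≤
      2 / (η * (η ^ T * M₁))) ∧
    (∀ T t, t < stageLen T →
      2 / (η * (η ^ T * M₁)) < euclNorm (wIter T (t + 1) - wIter T t)) ∧
    (∀ T, wStage (T + 1) = wIter T (stageLen T + 1))

/-- A real random variable `Z` is `R`-sub-Gaussian (ψ₂-norm at most `R`). -/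
def IsSubGaussianRV {Ω : Type*} [MeasurableSpace Ω] (μ : Measure Ω) (Z : Ω → ℝ) (R : ℝ) : Prop :=
  ∀ p : ℝ, 1 ≤ p → (∫ ω, |Z ω| ^ p ∂μ) ^ (1 / p) ≤ R * Real.sqrt p

/-- A distribution on `ℝ^d` is `R`-sub-Gaussian if all its one-dimensional marginals are. -/
def IsSubGaussianVec {d : ℕ} (D : Measure (Fin d → ℝ)) (R : ℝ) : Prop :=
  ∀ v : Fin d → ℝ, euclNorm v = 1 → IsSubGaussianRV D (fun x => v ⬝ᵥ x) R

/-- A distribution on `ℝ^d` is isotropic if `E ⟨v, x⟩² = 1` for every unit `v`. -/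
def IsIsotropic {d : ℕ} (D : Measure (Fin d → ℝ)) : Prop :=
  ∀ v : Fin d → ℝ, euclNorm v = 1 → ∫ x, (v ⬝ᵥ x) ^ 2 ∂D = 1

/-- The weighted strong convexity constant
`c = inf_{u,v unit} E_{x~D} [ min(1/|⟨u,x⟩|, 1) ⟨x,v⟩² ]`. -/
noncomputable def cWSC {d : ℕ} (D : Measure (Fin d → ℝ)) : ℝ :=
  ⨅ p : {q : (Fin d → ℝ) × (Fin d → ℝ) // euclNorm q.1 = 1 ∧ euclNorm q.2 = 1},
    ∫ x, trWeight 1 (p.1.1 ⬝ᵥ x) * (p.1.2 ⬝ᵥ x) ^ 2 ∂D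

/-- The weighted strong convexity constant in the presence of dense noise:
`c_ε = inf_{0 ≤ r ≤ 1/M, u,v unit} E [ min(1/|Mr⟨u,x⟩ - Mε|, 1) ⟨x,v⟩² ]`. -/
noncomputable def cWSCnoise {d : ℕ} (D : Measure (Fin d → ℝ)) (Dε : Measure ℝ) [SFinite Dε]
    (M : ℝ) : ℝ :=
  ⨅ p : {q : ℝ × (Fin d → ℝ) × (Fin d → ℝ) //
      0 ≤ q.1 ∧ q.1 ≤ 1 / M ∧ euclNorm q.2.1 = 1 ∧ euclNorm q.2.2 = 1},
    ∫ z : (Fin d → ℝ) × ℝ,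
      trWeight 1 (M * p.1.1 * (p.1.2.1 ⬝ᵥ z.1) - M * z.2) * (p.1.2.2 ⬝ᵥ z.1) ^ 2 ∂(D.prod Dε)

/-- The weighted Gram matrix `X_G S_G X_Gᵀ` induced by the sample `s`, the clean responses
`y_i = ⟨w*, x_i⟩`, the truncation level `M` and the model `w`. -/
noncomputable def gramG {d n : ℕ} (s : Fin n → Fin d → ℝ) (G : Finset (Fin n))
    (wstar : Fin d → ℝ) (M : ℝ) (w : Fin d → ℝ) : Matrix (Fin d) (Fin d) ℝ :=
  restrictCols (Xmat s) G *
    Matrix.diagonal (fun i => if i ∈ G then trWeight M (s i ⬝ᵥ (w - wstar)) else 0) *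
    (restrictCols (Xmat s) G)ᵀ

/-- The weighted Gram matrix `X_G S_G X_Gᵀ` in the dense-noise setting, where the responses
on good points are `y_i = ⟨w*, x_i⟩ + e_i`. -/
noncomputable def gramGnoisy {d n : ℕ} (s : Fin n → Fin d → ℝ) (e : Fin n → ℝ)
    (G : Finset (Fin n)) (wstar : Fin d → ℝ) (M : ℝ) (w : Fin d → ℝ) :
    Matrix (Fin d) (Fin d) ℝ :=
  restrictCols (Xmat s) G *
    Matrix.diagonal (fun i => if i ∈ G then trWeight M (s i ⬝ᵥ (w - wstar) - e i) else 0) *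
    (restrictCols (Xmat s) G)ᵀ

/-- The scaled Huber loss `f_ε`. -/
noncomputable def huberS (ε x : ℝ) : ℝ := if |x| ≤ ε then (x ^ 2 / ε + ε) / 2 else |x|

/-- The majorizer `g_ε(x; a)` of the scaled Huber loss. -/
noncomputable def huberMaj (ε x a : ℝ) : ℝ := (x ^ 2 / max |a| ε + max |a| ε) / 2

/-- The scaled-Huber objective `ℓ_ε(w) = (1/n) ∑ᵢ f_ε(⟨w, xᵢ⟩ - yᵢ)`. -/
noncomputable def huberObj {d n : ℕ} (X : Matrix (Fin d) (Fin n) ℝ) (y : Fin n → ℝ)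
    (ε : ℝ) (w : Fin d → ℝ) : ℝ :=
  (1 / (n : ℝ)) * ∑ i, huberS ε ((Xᵀ.mulVec w - y) i)

/-! For `M > 0` the truncated weight is `r ↦ (max |r| M⁻¹)⁻¹`. The map `r ↦ max |r| M⁻¹` is
1-Lipschitz with values in `[M⁻¹, ∞)`, where inversion is `M²`-Lipschitz, so the weight is
`M²`-Lipschitz in the residual (for `M ≤ 0` it is constant). The residuals of the two models differ
by `⟨w¹ - w², xᵢ⟩`, which Cauchy–Schwarz bounds by `τ R_X`. -/

lemma trWeight_of_nonpos {M : ℝ} (hM : M ≤ 0) (r : ℝ) : trWeight M r = M := by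
  unfold trWeight
  split_ifs
  · rfl
  · exact min_eq_right (hM.trans (by positivity))

lemma trWeight_eq_inv_max {M : ℝ} (hM : 0 < M) (r : ℝ) : trWeight M r = (max |r| M⁻¹)⁻¹ := by
  unfold trWeight
  split_ifs with hr
  · simp [hr, hM.le]
  · rw [inv_antitoneOn_Ioi.map_max (abs_pos.2 hr) (inv_pos.2 hM), inv_inv, one_div]

lemma abs_inv_sub_inv_le {a b c : ℝ} (hc : 0 < c) (ha : c ≤ a) (hb : c ≤ b) :
    |a⁻¹ - b⁻¹| ≤ |a - b| / c ^ 2 := by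
  have ha₀ : 0 < a := hc.trans_le ha
  have hb₀ : 0 < b := hc.trans_le hb
  rw [inv_sub_inv ha₀.ne' hb₀.ne', abs_div, abs_sub_comm, abs_of_pos (mul_pos ha₀ hb₀), sq]
  gcongr

lemma abs_trWeight_sub_le (M r₁ r₂ : ℝ) :
    |trWeight M r₁ - trWeight M r₂| ≤ M ^ 2 * |r₁ - r₂| := by
  rcases le_or_gt M 0 with hM | hM
  · simp only [trWeight_of_nonpos hM, sub_self, abs_zero]
    positivity
  have hM' : 0 < M⁻¹ := inv_pos.2 hM
  calc |trWeight M r₁ - trWeight M r₂|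
      ≤ |max |r₁| M⁻¹ - max |r₂| M⁻¹| / M⁻¹ ^ 2 := by
        rw [trWeight_eq_inv_max hM, trWeight_eq_inv_max hM]
        exact abs_inv_sub_inv_le hM' (le_max_right _ _) (le_max_right _ _)
    _ ≤ |r₁ - r₂| / M⁻¹ ^ 2 := by
        gcongr ?_ / _
        exact (abs_max_sub_max_le_abs _ _ _).trans (abs_abs_sub_abs_le_abs_sub r₁ r₂)
    _ = M ^ 2 * |r₁ - r₂| := by field_simp

lemma euclNorm_nonneg {k : ℕ} (v : Fin k → ℝ) : 0 ≤ euclNorm v := Real.sqrt_nonneg _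

lemma abs_dotProduct_le_euclNorm_mul {k : ℕ} (v u : Fin k → ℝ) :
    |v ⬝ᵥ u| ≤ euclNorm v * euclNorm u := by
  rw [← Real.sqrt_sq_eq_abs, euclNorm, euclNorm, ← Real.sqrt_mul (by positivity)]
  exact Real.sqrt_le_sqrt (Finset.sum_mul_sq_le_sq_mul_sq _ v u)

lemma abs_trWeight_residual_sub_le {k : ℕ} (M c : ℝ) (w₁ w₂ x : Fin k → ℝ) :
    |trWeight M (w₁ ⬝ᵥ x - c) - trWeight M (w₂ ⬝ᵥ x - c)| ≤
      M ^ 2 * (euclNorm (w₁ - w₂) * euclNorm x) := by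
  calc _ ≤ M ^ 2 * |(w₁ ⬝ᵥ x - c) - (w₂ ⬝ᵥ x - c)| := abs_trWeight_sub_le _ _ _
    _ = M ^ 2 * |(w₁ - w₂) ⬝ᵥ x| := by rw [sub_sub_sub_cancel_right, sub_dotProduct]
    _ ≤ M ^ 2 * (euclNorm (w₁ - w₂) * euclNorm x) := by
        gcongr
        exact abs_dotProduct_le_euclNorm_mul _ _

theorem irls_weight_approximation_general
    {d n : ℕ} (x : Fin n → Fin d → ℝ) (y : Fin n → ℝ)
    (w1 w2 : Fin d → ℝ) (τ M RX : ℝ)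
    (hw : euclNorm (w1 - w2) ≤ τ)
    (hX : ∀ i, euclNorm (x i) ≤ RX) :
    (∀ i, |trWeight M (w1 ⬝ᵥ x i - y i) - trWeight M (w2 ⬝ᵥ x i - y i)| ≤
      2 * τ * M ^ 2 * RX) ∧
    ∑ i, |trWeight M (w1 ⬝ᵥ x i - y i) - trWeight M (w2 ⬝ᵥ x i - y i)| ≤
      2 * n * τ * M ^ 2 * RX := by
  have hτ : 0 ≤ τ := (euclNorm_nonneg _).trans hw
  have coord : ∀ i, |trWeight M (w1 ⬝ᵥ x i - y i) - trWeight M (w2 ⬝ᵥ x i - y i)| ≤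
      2 * τ * M ^ 2 * RX := by
    intro i
    have hRX : 0 ≤ RX := (euclNorm_nonneg _).trans (hX i)
    calc _ ≤ M ^ 2 * (euclNorm (w1 - w2) * euclNorm (x i)) :=
          abs_trWeight_residual_sub_le M (y i) w1 w2 (x i)
      _ ≤ M ^ 2 * (τ * RX) := by
          gcongr M ^ 2 * ?_; exact mul_le_mul hw (hX i) (euclNorm_nonneg _) hτ
      _ ≤ 2 * τ * M ^ 2 * RX := by linarith [mul_nonneg (sq_nonneg M) (mul_nonneg hτ hRX)]
  refine ⟨coord, ?_⟩
  calc _ ≤ Finset.univ.card • (2 * τ * M ^ 2 * RX) :=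
        Finset.sum_le_card_nsmul _ _ _ fun i _ => coord i
    _ = 2 * n * τ * M ^ 2 * RX := by
        rw [Finset.card_univ, Fintype.card_fin, nsmul_eq_mul]; ring

/-- **Lemma (approximation bound for truncated weights).**
If `‖w¹ - w²‖ ≤ τ` and all covariates have norm at most `R_X`, then the `M`-truncated
weights induced by the two models satisfy `|s¹ᵢ - s²ᵢ| ≤ 2 τ M² R_X` coordinatewise,
and consequently `‖s¹ - s²‖₁ ≤ 2 n τ M² R_X`. -/
theorem irls_weight_approximation
    {d n : ℕ} (x : Fin n → Fin d → ℝ) (y : Fin n → ℝ)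
    (w1 w2 : Fin d → ℝ) (τ M RX : ℝ) (hM : 0 < M)
    (hw : euclNorm (w1 - w2) ≤ τ)
    (hX : ∀ i, euclNorm (x i) ≤ RX) :
    (∀ i, |trWeight M (w1 ⬝ᵥ x i - y i) - trWeight M (w2 ⬝ᵥ x i - y i)| ≤
      2 * τ * M ^ 2 * RX) ∧
    ∑ i, |trWeight M (w1 ⬝ᵥ x i - y i) - trWeight M (w2 ⬝ᵥ x i - y i)| ≤
      2 * n * τ * M ^ 2 * RX :=
  irls_weight_approximation_general x y w1 w2 τ M RX hw hX
end

section
/- Let y = X^T w* + b where b ∈ R^n is supported on the set B of corrupted points, let w ∈ R^d be any model with ‖w − w*‖_2 = ε, let r = X^T w − y, and let S = diag(s) with s_i = min(1/|r_i|, M). Then, deterministically, ‖S b‖_2² ≤ 4·(|B| + M²ε²·λ_max(X_B X_B^T)); in particular, if λ_max(X_B X_B^T) ≤ 1.01|B| then ‖S b‖_2² ≤ 4|B|·(1 + 1.01·M²ε²). -/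
open MeasureTheory ProbabilityTheory Matrix

section TruncatedWeight

variable {M : ℝ}

lemma trWeight_nonneg (hM : 0 ≤ M) (r : ℝ) : 0 ≤ trWeight M r := by
  unfold trWeight
  split_ifs
  exacts [hM, le_min (by positivity) hM]

lemma trWeight_le (r : ℝ) : trWeight M r ≤ M := by
  unfold trWeight
  split_ifs
  exacts [le_rfl, min_le_right _ _]

lemma trWeight_le_one_div_abs {r : ℝ} (hr : r ≠ 0) : trWeight M r ≤ 1 / |r| := by
  rw [trWeight, if_neg hr]
  exact min_le_left _ _

/-- A large corruption `c` makes the residual `a - c` large too, so the weight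
`≤ 1/|a - c|` absorbs it; a small one is controlled by the cap `M`. -/
lemma sq_trWeight_sub_mul_le (hM : 0 ≤ M) (a c : ℝ) :
    (trWeight M (a - c) * c) ^ 2 ≤ 4 * max 1 (M ^ 2 * a ^ 2) := by
  have hs0 := trWeight_nonneg hM (a - c)
  rcases le_or_gt |c| (2 * |a|) with hc | hc
  · have hsc : trWeight M (a - c) * |c| ≤ M * (2 * |a|) :=
      mul_le_mul (trWeight_le _) hc (abs_nonneg c) hM
    calc (trWeight M (a - c) * c) ^ 2 = (trWeight M (a - c) * |c|) ^ 2 := by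
          rw [mul_pow, mul_pow, sq_abs]
      _ ≤ (M * (2 * |a|)) ^ 2 := by gcongr
      _ = 4 * (M ^ 2 * a ^ 2) := by rw [mul_pow, mul_pow, sq_abs]; ring
      _ ≤ 4 * max 1 (M ^ 2 * a ^ 2) := by gcongr; exact le_max_right _ _
  · have hac : |c| ≤ 2 * |a - c| := by linarith [abs_sub_abs_le_abs_sub c a, abs_sub_comm a c]
    have hac0 : 0 < |a - c| := by linarith [abs_nonneg a]
    have hsc : trWeight M (a - c) * |c| ≤ 2 :=
      calc trWeight M (a - c) * |c| ≤ 1 / |a - c| * (2 * |a - c|) :=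
            mul_le_mul (trWeight_le_one_div_abs (abs_pos.mp hac0)) hac (abs_nonneg c)
              (by positivity)
        _ = 2 := by field_simp
    calc (trWeight M (a - c) * c) ^ 2 = (trWeight M (a - c) * |c|) ^ 2 := by
          rw [mul_pow, mul_pow, sq_abs]
      _ ≤ 2 ^ 2 := by gcongr
      _ ≤ 4 * max 1 (M ^ 2 * a ^ 2) := by norm_num

end TruncatedWeight

section Rayleigh

variable {k : ℕ}

lemma euclNorm_eq_norm (v : Fin k → ℝ) :
    euclNorm v = ‖(WithLp.toLp 2 v : EuclideanSpace ℝ (Fin k))‖ := by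
  simp [euclNorm, EuclideanSpace.norm_eq]

lemma abs_le_one_of_euclNorm_eq_one {v : Fin k → ℝ} (hv : euclNorm v = 1) (i : Fin k) :
    |v i| ≤ 1 := by
  rw [euclNorm_eq_norm] at hv
  simpa [hv] using PiLp.norm_apply_le (WithLp.toLp 2 v : EuclideanSpace ℝ (Fin k)) i

lemma bddAbove_rayleigh (A : Matrix (Fin k) (Fin k) ℝ) :
    BddAbove {r : ℝ | ∃ v : Fin k → ℝ, euclNorm v = 1 ∧ r = v ⬝ᵥ A.mulVec v} := by
  refine ⟨∑ i, ∑ j, |A i j|, ?_⟩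
  rintro _ ⟨v, hv, rfl⟩
  have hvi := abs_le_one_of_euclNorm_eq_one hv
  calc v ⬝ᵥ A.mulVec v = ∑ i, ∑ j, v i * A i j * v j := by
        simp only [dotProduct, mulVec, Finset.mul_sum, mul_assoc]
    _ ≤ ∑ i, ∑ j, |A i j| := by
        gcongr with i _ j _
        calc v i * A i j * v j ≤ |v i| * |A i j| * |v j| := by
              rw [← abs_mul, ← abs_mul]; exact le_abs_self _
          _ ≤ 1 * |A i j| * 1 := by gcongr <;> exact hvi _
          _ = |A i j| := by ring

lemma dotProduct_mulVec_le_lamMax (A : Matrix (Fin k) (Fin k) ℝ) (u : Fin k → ℝ) :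
    u ⬝ᵥ A.mulVec u ≤ lamMax A * euclNorm u ^ 2 := by
  rcases eq_or_ne u 0 with rfl | hu
  · simp [euclNorm]
  have hε : 0 < euclNorm u := by
    rw [euclNorm_eq_norm]
    exact norm_pos_iff.mpr (by simpa using hu)
  set ε := euclNorm u
  have hunit : euclNorm (ε⁻¹ • u) = 1 := by
    rw [euclNorm_eq_norm, WithLp.toLp_smul, norm_smul, ← euclNorm_eq_norm, norm_inv,
      Real.norm_of_nonneg hε.le, inv_mul_cancel₀ hε.ne']
  calc u ⬝ᵥ A.mulVec u = (ε⁻¹ • u) ⬝ᵥ A.mulVec (ε⁻¹ • u) * ε ^ 2 := by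
        simp only [mulVec_smul, smul_dotProduct, dotProduct_smul, smul_eq_mul]
        field_simp
    _ ≤ lamMax A * ε ^ 2 := by
        gcongr
        exact le_csSup (bddAbove_rayleigh A) ⟨_, hunit, rfl⟩

end Rayleigh

lemma dotProduct_mul_transpose_mulVec {d n : ℕ} (Y : Matrix (Fin d) (Fin n) ℝ) (u : Fin d → ℝ) :
    u ⬝ᵥ (Y * Yᵀ).mulVec u = Yᵀ.mulVec u ⬝ᵥ Yᵀ.mulVec u := by
  rw [← mulVec_mulVec, dotProduct_mulVec, ← mulVec_transpose]

lemma transpose_restrictCols_mulVec {d n : ℕ} (X : Matrix (Fin d) (Fin n) ℝ)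
    (B : Finset (Fin n)) (u : Fin d → ℝ) (i : Fin n) :
    (restrictCols X B)ᵀ.mulVec u i = if i ∈ B then Xᵀ.mulVec u i else 0 := by
  split_ifs with hi <;> simp [restrictCols, mulVec, dotProduct, hi]

lemma sum_sq_transpose_mulVec_le_lamMax {d n : ℕ} (X : Matrix (Fin d) (Fin n) ℝ)
    (B : Finset (Fin n)) (u : Fin d → ℝ) :
    ∑ i ∈ B, Xᵀ.mulVec u i ^ 2 ≤
      lamMax (restrictCols X B * (restrictCols X B)ᵀ) * euclNorm u ^ 2 := by
  refine le_of_eq_of_le ?_ (dotProduct_mulVec_le_lamMax _ u)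
  rw [dotProduct_mul_transpose_mulVec, dotProduct, ← Fintype.sum_ite_mem]
  refine Finset.sum_congr rfl fun i _ => ?_
  rw [transpose_restrictCols_mulVec]
  split_ifs <;> ring

lemma stirWeights_add_corruption {d n : ℕ} (X : Matrix (Fin d) (Fin n) ℝ) (wstar w : Fin d → ℝ)
    (b : Fin n → ℝ) (M : ℝ) (i : Fin n) :
    stirWeights X (Xᵀ.mulVec wstar + b) M w i = trWeight M (Xᵀ.mulVec (w - wstar) i - b i) := by
  simp only [stirWeights, mulVec_sub, Pi.sub_apply, Pi.add_apply]
  ring_nf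

/-- **Lemma (bounding the weights on bad points).**
With responses `y = Xᵀ w* + b`, corruption `b` supported on `B`, a model `w` at distance
`ε` from `w*`, and `M`-truncated weights `S` induced by the residuals of `w`,
deterministically `‖S b‖₂² ≤ 4 (|B| + M² ε² λ_max(X_B X_Bᵀ))`; in particular if
`λ_max(X_B X_Bᵀ) ≤ 1.01 |B|` then `‖S b‖₂² ≤ 4 |B| (1 + 1.01 M² ε²)`. -/
theorem bad_points_weight_bound
    {d n : ℕ} (X : Matrix (Fin d) (Fin n) ℝ) (wstar w : Fin d → ℝ)
    (b : Fin n → ℝ) (B : Finset (Fin n)) (M ε : ℝ)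
    (hM : 0 ≤ M) (hb : ∀ i, i ∉ B → b i = 0)
    (hε : euclNorm (w - wstar) = ε) :
    (∑ i, (stirWeights X (Xᵀ.mulVec wstar + b) M w i * b i) ^ 2 ≤
      4 * (B.card + M ^ 2 * ε ^ 2 * lamMax (restrictCols X B * (restrictCols X B)ᵀ))) ∧
    (lamMax (restrictCols X B * (restrictCols X B)ᵀ) ≤ 1.01 * B.card →
      ∑ i, (stirWeights X (Xᵀ.mulVec wstar + b) M w i * b i) ^ 2 ≤
        4 * B.card * (1 + 1.01 * M ^ 2 * ε ^ 2)) := by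
  set a := Xᵀ.mulVec (w - wstar)
  set lam := lamMax (restrictCols X B * (restrictCols X B)ᵀ)
  have hfirst : ∑ i, (stirWeights X (Xᵀ.mulVec wstar + b) M w i * b i) ^ 2 ≤
      4 * (B.card + M ^ 2 * ε ^ 2 * lam) :=
    calc ∑ i, (stirWeights X (Xᵀ.mulVec wstar + b) M w i * b i) ^ 2
        = ∑ i ∈ B, (trWeight M (a i - b i) * b i) ^ 2 := by
          rw [← Finset.sum_subset (Finset.subset_univ B) fun i _ hi => by simp [hb i hi]]
          simp only [stirWeights_add_corruption, a]
      _ ≤ ∑ i ∈ B, 4 * (1 + M ^ 2 * a i ^ 2) := by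
          gcongr with i
          exact (sq_trWeight_sub_mul_le hM _ _).trans
            (by gcongr; exact max_le_add_of_nonneg zero_le_one (by positivity))
      _ = 4 * (B.card + M ^ 2 * ∑ i ∈ B, a i ^ 2) := by
          simp only [Finset.mul_sum, Finset.sum_add_distrib, Finset.sum_const, nsmul_eq_mul,
            mul_add]
          ring
      _ ≤ 4 * (B.card + M ^ 2 * (lam * ε ^ 2)) := by
          rw [← hε]
          gcongr
          exact sum_sq_transpose_mulVec_le_lamMax X B _
      _ = 4 * (B.card + M ^ 2 * ε ^ 2 * lam) := by ring
  refine ⟨hfirst, fun hlam => hfirst.trans ?_⟩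
  calc 4 * (B.card + M ^ 2 * ε ^ 2 * lam)
      ≤ 4 * (B.card + M ^ 2 * ε ^ 2 * (1.01 * B.card)) := by gcongr
    _ = 4 * B.card * (1 + 1.01 * M ^ 2 * ε ^ 2) := by ring
end
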